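/- arXiv:1107.4380 — 3 statements merged into one kernel-verified Lean document; each statement's English description precedes it below -/
import Mathlib

section
/- For every nonzero linear partial difference operator with constant coefficients P on functions Z^n → ℂ, there exists a function f : Z^n → ℂ such that P f equals the discrete delta function (which is 1 at the origin and 0 elsewhere). -/
/-!
Order `ℤ^n` lexicographically. The operator `P` corresponds to the Laurent polynomial
`∑ c_α X^(-α)`, a nonzero element of the field of Hahn series over `ℤ^n`, and multiplying a
Hahn series by it applies `P` to the coefficients. The coefficients of its inverse are
therefore a fundamental solution.
-/

open Finset HahnSeries

section

variable {Γ R : Type*} [AddCommGroup Γ] [PartialOrder Γ] [Semiring R]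

noncomputable def differenceSymbol (A : Finset Γ) (c : Γ → R) : R⟦Γ⟧ :=
  ∑ α ∈ A, single (-α) (c α)

theorem coeff_differenceSymbol_neg (A : Finset Γ) (c : Γ → R) {α : Γ} (hα : α ∈ A) :
    (differenceSymbol A c).coeff (-α) = c α := by
  rw [differenceSymbol, coeff_sum, sum_eq_single_of_mem α hα, coeff_single_same]
  intro β _ hβ
  exact coeff_single_of_ne (neg_injective.ne hβ.symm)

theorem coeff_differenceSymbol_mul [IsOrderedCancelAddMonoid Γ] (A : Finset Γ) (c : Γ → R)
    (F : R⟦Γ⟧) (m : Γ) :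
    (differenceSymbol A c * F).coeff m = ∑ α ∈ A, c α * F.coeff (m + α) := by
  rw [differenceSymbol, sum_mul, coeff_sum]
  refine sum_congr rfl fun α _ => ?_
  rw [← coeff_single_mul_add, add_neg_cancel_right]

end

theorem exists_fundamental_solution {Γ R : Type*} [AddCommGroup Γ] [LinearOrder Γ]
    [IsOrderedAddMonoid Γ] [Field R] (A : Finset Γ) (c : Γ → R) (hne : ∃ α ∈ A, c α ≠ 0) :
    ∃ f : Γ → R, ∀ m, ∑ α ∈ A, c α * f (m + α) = if m = 0 then 1 else 0 := by
  obtain ⟨α, hα, hcα⟩ := hne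
  have hP : differenceSymbol A c ≠ 0 := fun h =>
    hcα (by rw [← coeff_differenceSymbol_neg A c hα, h, coeff_zero])
  refine ⟨(differenceSymbol A c)⁻¹.coeff, fun m => ?_⟩
  rw [← coeff_differenceSymbol_mul, mul_inv_cancel₀ hP, coeff_one]
  congr

/-- Discrete Malgrange–Ehrenpreis theorem: every nonzero linear partial
difference operator with constant coefficients on `ℤ^n → ℂ` has a
fundamental solution. -/
theorem discrete_malgrange_ehrenpreis (n : ℕ) (A : Finset (Fin n → ℤ))
    (c : (Fin n → ℤ) → ℂ) (hne : ∃ α ∈ A, c α ≠ 0) :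
    ∃ f : (Fin n → ℤ) → ℂ, ∀ m : Fin n → ℤ,
      (∑ α ∈ A, c α * f (m + α)) = if m = 0 then 1 else 0 := by
  obtain ⟨f, hf⟩ := exists_fundamental_solution (A.map toLex.toEmbedding) (c ∘ ofLex)
    (by simpa using hne)
  exact ⟨f ∘ toLex, fun m => by simpa using hf (toLex m)⟩
end

section
/- Let P be a nonzero Laurent polynomial in n variables and δ the delta functional on Laurent polynomials sending a Laurent polynomial to its constant coefficient. The assignment P·a ↦ δ(a) is a well-defined linear functional on the subspace P·ℂ[z_1^{±1},…,z_n^{±1}], and any linear extension T of it to all Laurent polynomials yields, via f(m) := T(z^m), a fundamental solution of the difference operator with symbol P. -/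
/-!
The Laurent polynomial ring `ℂ[ℤⁿ]` is a domain (`ℤⁿ` is torsion-free), and `P ≠ 0` because its
coefficient at some `α ∈ A` is `c α ≠ 0`; so `P * a = P * b` forces `a = b`. For a linear
extension `T`, expanding `P * z^m = ∑ α, c α z^(m + α)` gives
`∑ α, c α T(z^(m + α)) = T(P * z^m) = δ(z^m)`, which is the discrete delta at `m`.
-/

namespace AddMonoidAlgebra

variable {k G : Type*} [CommSemiring k]

lemma coeff_sum_single_of_mem [AddMonoid G] {s : Finset G} {α : G} (c : G → k) (hα : α ∈ s) :
    (∑ β ∈ s, single β (c β)).coeff α = c α := by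
  classical
  simp [coeff_sum, coeff_single, Finsupp.finsetSum_apply, Finsupp.single_apply, hα]

lemma sum_single_ne_zero [AddMonoid G] {s : Finset G} {c : G → k} (h : ∃ α ∈ s, c α ≠ 0) :
    ∑ α ∈ s, single α (c α) ≠ 0 := by
  obtain ⟨α, hα, hc⟩ := h
  intro h0
  exact hc (by simpa [h0] using (coeff_sum_single_of_mem c hα).symm)

lemma linearMap_sum_single_mul_single [AddCommMonoid G] {M : Type*} [AddCommMonoid M]
    [Module k M] (T : AddMonoidAlgebra k G →ₗ[k] M) (s : Finset G) (c : G → k) (m : G) :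
    T ((∑ α ∈ s, single α (c α)) * single m 1) = ∑ α ∈ s, c α • T (single (m + α) 1) := by
  simp only [Finset.sum_mul, single_mul_single, mul_one, map_sum, ← map_smul, smul_single',
    add_comm]

end AddMonoidAlgebra

/-- The assignment `P·a ↦ δ(a)` (constant coefficient of `a`) is well defined
on the subspace `P·ℂ[z₁^{±1},…,z_n^{±1}]`, and any linear extension `T` of it
to all Laurent polynomials yields, via `f m := T (z^m)`, a fundamental solution
of the difference operator with symbol `P`. -/
theorem delta_functional_wellDefined_and_extension_gives_fundamental_solution
    (n : ℕ) (A : Finset (Fin n → ℤ)) (c : (Fin n → ℤ) → ℂ)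
    (hne : ∃ α ∈ A, c α ≠ 0)
    (P : AddMonoidAlgebra ℂ (Fin n → ℤ))
    (hP : P = ∑ α ∈ A, AddMonoidAlgebra.single α (c α)) :
    (∀ a b : AddMonoidAlgebra ℂ (Fin n → ℤ), P * a = P * b → a.coeff 0 = b.coeff 0) ∧
    ∀ T : AddMonoidAlgebra ℂ (Fin n → ℤ) →ₗ[ℂ] ℂ,
      (∀ a : AddMonoidAlgebra ℂ (Fin n → ℤ), T (P * a) = a.coeff 0) →
      ∀ m : Fin n → ℤ,
        (∑ α ∈ A, c α * T (AddMonoidAlgebra.single (m + α) 1)) =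
          if m = 0 then 1 else 0 := by
  have hP0 : P ≠ 0 := hP ▸ AddMonoidAlgebra.sum_single_ne_zero hne
  refine ⟨fun a b hab => by rw [mul_left_cancel₀ hP0 hab], fun T hT m => ?_⟩
  calc ∑ α ∈ A, c α * T (AddMonoidAlgebra.single (m + α) 1)
      = T (P * AddMonoidAlgebra.single m 1) := by
        rw [hP, AddMonoidAlgebra.linearMap_sum_single_mul_single]
        simp only [smul_eq_mul]
    _ = if m = 0 then 1 else 0 := by
        simp [hT, AddMonoidAlgebra.coeff_single, Finsupp.single_apply]
end

section
/- Two-variable constructive fundamental solution via iterated Laurent series: let P(z_1,z_2) be a nonzero Laurent polynomial over ℂ. Then P(z_1^{-1}, z_2^{-1}) is invertible in the iterated field of formal Laurent series ℂ((z_2))((z_1)), and if each coefficient function m ↦ [z_1^{m_1} z_2^{m_2}] of this inverse is well-defined, then f(m_1,m_2) := coefficient of z_1^{m_1} z_2^{m_2} in the inverse is a fundamental solution: Σ_α c_α f(m+α) = δ(m,0) for all m ∈ Z^2. -/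
/-!
The coefficient of `z₁^m₁ z₂^m₂` in `P(z₁⁻¹, z₂⁻¹) · g` is `∑ α, c α · g_{m+α}`, so reading
`P(z₁⁻¹, z₂⁻¹) · P(z₁⁻¹, z₂⁻¹)⁻¹ = 1` coefficientwise is exactly the fundamental-solution
identity. The inverse exists because `ℂ((z₂))((z₁))` is a field and `P(z₁⁻¹, z₂⁻¹) ≠ 0`: its
coefficient at `z^(-α)` is `c α`.
-/

open HahnSeries

theorem HahnSeries.coeff_coeff_one {Γ Γ' R : Type*} [PartialOrder Γ] [Zero Γ] [DecidableEq Γ]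
    [PartialOrder Γ'] [Zero Γ'] [DecidableEq Γ'] [Zero R] [One R] (m : Γ × Γ') :
    ((1 : HahnSeries Γ (HahnSeries Γ' R)).coeff m.1).coeff m.2 = if m = 0 then 1 else 0 := by
  by_cases h₁ : m.1 = 0 <;> by_cases h₂ : m.2 = 0 <;> simp [coeff_one, h₁, h₂, Prod.ext_iff]

section

variable {Γ Γ' R : Type*} [PartialOrder Γ] [AddCommGroup Γ] [IsOrderedAddMonoid Γ]
  [PartialOrder Γ'] [AddCommGroup Γ'] [IsOrderedAddMonoid Γ']

theorem HahnSeries.coeff_coeff_single_single_mul [NonUnitalNonAssocSemiring R] (a : Γ) (b : Γ')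
    (r : R) (x : HahnSeries Γ (HahnSeries Γ' R)) (m : Γ) (n : Γ') :
    ((single a (single b r) * x).coeff m).coeff n = r * (x.coeff (m - a)).coeff (n - b) := by
  rw [coeff_single_mul, coeff_single_mul]

theorem HahnSeries.coeff_coeff_sum_single_single_mul [NonUnitalNonAssocSemiring R]
    (A : Finset (Γ × Γ')) (c : Γ × Γ' → R) (x : HahnSeries Γ (HahnSeries Γ' R)) (m : Γ × Γ') :
    (((∑ α ∈ A, single (-α.1) (single (-α.2) (c α))) * x).coeff m.1).coeff m.2 =
      ∑ α ∈ A, c α * (x.coeff (m.1 + α.1)).coeff (m.2 + α.2) := by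
  simp only [Finset.sum_mul, coeff_sum, coeff_coeff_single_single_mul, sub_neg_eq_add]

theorem HahnSeries.sum_single_single_ne_zero [NonAssocSemiring R] {A : Finset (Γ × Γ')}
    {c : Γ × Γ' → R} (h : ∃ α ∈ A, c α ≠ 0) :
    ∑ α ∈ A, single (-α.1) (single (-α.2) (c α)) ≠ 0 := by
  classical
  obtain ⟨α₀, hα₀, hc⟩ := h
  intro h0
  have hcoeff := coeff_coeff_sum_single_single_mul A c 1 (-α₀)
  simp only [h0, coeff_zero, ← Prod.fst_add, ← Prod.snd_add, coeff_coeff_one,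
    neg_add_eq_zero, mul_ite, mul_one, mul_zero, Finset.sum_ite_eq, hα₀, if_true] at hcoeff
  exact hc hcoeff.symm

end

/-- Two-variable constructive fundamental solution via iterated Laurent
series: `P(z₁⁻¹, z₂⁻¹)` is invertible in `ℂ((z₂))((z₁))`, and the
coefficient function of the inverse, `f(m₁,m₂) :=` coefficient of
`z₁^{m₁} z₂^{m₂}`, is a fundamental solution of the operator with symbol
`P`. -/
theorem constructive_fundamental_solution_two_vars
    (A : Finset (ℤ × ℤ)) (c : ℤ × ℤ → ℂ) (hne : ∃ α ∈ A, c α ≠ 0) :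
    ∃ g : LaurentSeries (LaurentSeries ℂ),
      (∑ α ∈ A, HahnSeries.single (-α.1) (HahnSeries.single (-α.2) (c α))) * g
          = 1 ∧
      ∀ m : ℤ × ℤ,
        (∑ α ∈ A, c α * (g.coeff (m.1 + α.1)).coeff (m.2 + α.2)) =
          if m = 0 then 1 else 0 := by
  have hP :=
    mul_inv_cancel₀ (G₀ := LaurentSeries (LaurentSeries ℂ)) (sum_single_single_ne_zero hne)
  refine ⟨_, hP, fun m => ?_⟩
  rw [← coeff_coeff_sum_single_single_mul, hP, coeff_coeff_one]
end
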